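/- arXiv:0807.4808 — 3 statements merged into one kernel-verified Lean document; each statement's English description precedes it below -/
import Mathlib

section
/- There exists ε > 0 such that for all real x with |x| < ε, F(1/4, 7/12; 4/3; x(x+4)^3 / (4(2x-1)^3)) = (1 / (1 + x/4)) · (1-2x)^(3/4). -/
/-!
Both sides satisfy, for small `x ≠ 0`, the linear equation `y'' = odeP x * y' + odeQ x * y`:
the left side because it is the pull-back along `phi` of the hypergeometric equation satisfied by
`F(1/4, 7/12; 4/3; ·)`, the right side by a direct computation with its logarithmic derivative.
At `x = 0` this equation has a regular singular point with `odeP x ~ -4/(3x)` and `x * odeQ x`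
bounded, and both sides have value `1` and slope `-7/4` there. For such an equation a solution
with `u 0 = u' 0 = 0` vanishes near `0`: the integrating factor `x ^ (4/3)` turns the equation into
an estimate `|u'| ≤ 2 K (max |u'|) |x|`, which forces `max |u'| = 0` on a short enough interval.
-/

open Real

/-- The Gauss hypergeometric series `F(a,b;c;z) = ∑ ((a)_n (b)_n / ((c)_n n!)) z^n`,
where `(q)_n` is the rising (Pochhammer) factorial. -/
noncomputable def hypgeo (a b c z : ℝ) : ℝ :=
  ∑' n : ℕ, ((∏ i ∈ Finset.range n, (a + i)) * (∏ i ∈ Finset.range n, (b + i)) /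
    ((∏ i ∈ Finset.range n, (c + i)) * (Nat.factorial n))) * z ^ n

open Set

noncomputable def powerSum (c : ℕ → ℝ) (z : ℝ) : ℝ := ∑' n, c n * z ^ n

def derivCoeff (c : ℕ → ℝ) (n : ℕ) : ℝ := (n + 1) * c (n + 1)

def PolyGrowth (c : ℕ → ℝ) : Prop := ∃ C : ℝ, ∃ k : ℕ, ∀ n, |c n| ≤ C * ((n : ℝ) + 1) ^ k

lemma summable_add_one_pow_mul_geometric (k : ℕ) {r : ℝ} (hr : |r| < 1) :
    Summable fun n : ℕ => ((n : ℝ) + 1) ^ k * r ^ n := by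
  have hexp : (fun n : ℕ => ((n : ℝ) + 1) ^ k * r ^ n) =
      fun n : ℕ => ∑ i ∈ Finset.range (k + 1), (k.choose i : ℝ) * ((n : ℝ) ^ i * r ^ n) := by
    funext n
    rw [add_pow, Finset.sum_mul]
    exact Finset.sum_congr rfl fun i _ => by ring
  rw [hexp]
  refine summable_sum (f := fun i (n : ℕ) => (k.choose i : ℝ) * ((n : ℝ) ^ i * r ^ n)) fun i _ => ?_
  exact (summable_pow_mul_geometric_of_norm_lt_one (R := ℝ) i
    (by rwa [Real.norm_eq_abs])).mul_left _

namespace PolyGrowth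

variable {c : ℕ → ℝ}

lemma summable_abs (h : PolyGrowth c) {z : ℝ} (hz : |z| < 1) :
    Summable fun n => |c n * z ^ n| := by
  obtain ⟨C, k, hC⟩ := h
  have hz' : |(|z|)| < 1 := by rwa [abs_abs]
  refine ((summable_add_one_pow_mul_geometric k hz').mul_left C).of_nonneg_of_le
    (fun n => abs_nonneg _) fun n => ?_
  rw [abs_mul, abs_pow, ← mul_assoc]
  exact mul_le_mul_of_nonneg_right (hC n) (by positivity)

lemma summable (h : PolyGrowth c) {z : ℝ} (hz : |z| < 1) : Summable fun n => c n * z ^ n :=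
  (h.summable_abs hz).of_abs

lemma derivCoeff (h : PolyGrowth c) : PolyGrowth (derivCoeff c) := by
  obtain ⟨C, k, hC⟩ := h
  refine ⟨2 ^ k * C, k + 1, fun n => ?_⟩
  have hC0 : 0 ≤ C := by simpa using (abs_nonneg _).trans (hC 0)
  have hshift : ((n + 1 : ℕ) : ℝ) + 1 ≤ 2 * ((n : ℝ) + 1) := by push_cast; linarith
  calc |_root_.derivCoeff c n| = ((n : ℝ) + 1) * |c (n + 1)| := by
        rw [_root_.derivCoeff, abs_mul, abs_of_pos (by positivity)]
    _ ≤ ((n : ℝ) + 1) * (C * (2 * ((n : ℝ) + 1)) ^ k) := by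
        gcongr
        exact (hC (n + 1)).trans (by gcongr)
    _ = 2 ^ k * C * ((n : ℝ) + 1) ^ (k + 1) := by rw [mul_pow]; ring

theorem hasDerivAt_powerSum (h : PolyGrowth c) {z : ℝ} (hz : |z| < 1) :
    HasDerivAt (powerSum c) (powerSum (_root_.derivCoeff c) z) z := by
  obtain ⟨R, hzR, hR1⟩ := exists_between hz
  have hR : |R| < 1 := by rwa [abs_of_pos ((abs_nonneg z).trans_lt hzR)]
  have hsum0 : Summable fun n => c (n + 1) * (0 : ℝ) ^ (n + 1) := by simp
  -- differentiating `c 0 + ∑ c (n + 1) y ^ (n + 1)` avoids the truncated exponent `n - 1`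
  have hshifted : HasDerivAt (fun y => ∑' n, c (n + 1) * y ^ (n + 1))
      (∑' n, _root_.derivCoeff c n * z ^ n) z := by
    refine hasDerivAt_tsum_of_isPreconnected (g := fun n y => c (n + 1) * y ^ (n + 1))
      (g' := fun n y => _root_.derivCoeff c n * y ^ n) (h.derivCoeff.summable_abs hR)
      Metric.isOpen_ball (convex_ball (0 : ℝ) R).isPreconnected (y₀ := (0 : ℝ))
      (fun n y _ => ?_) (fun n y hy => ?_)
      (Metric.mem_ball_self ((abs_nonneg z).trans_lt hzR)) hsum0 (mem_ball_zero_iff.2 hzR)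
    · refine ((hasDerivAt_pow (n + 1) y).const_mul (c (n + 1))).congr_deriv ?_
      rw [Nat.add_sub_cancel, _root_.derivCoeff]; push_cast; ring
    · rw [Real.norm_eq_abs, abs_mul, abs_mul, abs_pow, abs_pow]
      exact mul_le_mul_of_nonneg_left (pow_le_pow_left₀ (abs_nonneg y)
        ((mem_ball_zero_iff.1 hy).le.trans (le_abs_self R)) n) (abs_nonneg _)
  refine (hshifted.const_add (c 0)).congr_of_eventuallyEq ?_
  filter_upwards [Metric.isOpen_ball.mem_nhds (mem_ball_zero_iff.2 hz)] with y hy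
  rw [powerSum, (h.summable (mem_ball_zero_iff.1 hy)).tsum_eq_zero_add]
  simp

end PolyGrowth

lemma hasSum_natCast_mul_of_hasSum_derivCoeff {c : ℕ → ℝ} {z S : ℝ}
    (h : HasSum (fun n => derivCoeff c n * z ^ n) S) :
    HasSum (fun n => n * c n * z ^ n) (z * S) := by
  rw [← hasSum_nat_add_iff' 1]
  simpa using (h.mul_left z).congr_fun fun n => by simp only [derivCoeff]; ring

theorem hypergeometric_ode_of_hasSum {a b γ z F F' F'' : ℝ} {c : ℕ → ℝ}
    (hrec : ∀ n : ℕ, (n + 1) * (n + γ) * c (n + 1) = (n + a) * (n + b) * c n)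
    (hF : HasSum (fun n => c n * z ^ n) F)
    (hF' : HasSum (fun n => derivCoeff c n * z ^ n) F')
    (hF'' : HasSum (fun n => derivCoeff (derivCoeff c) n * z ^ n) F'') :
    z * (1 - z) * F'' + (γ - (a + b + 1) * z) * F' - a * b * F = 0 := by
  -- with `θ = z d/dz`: `θ F' = z F''`, `θ (θ - 1) F = z ^ 2 F''`, `θ F = z F'`
  have hθF' := hasSum_natCast_mul_of_hasSum_derivCoeff hF''
  have hθθF := hasSum_natCast_mul_of_hasSum_derivCoeff (c := fun n => (n - 1) * c n) (by
    convert hθF' using 2 with n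
    simp only [derivCoeff]; push_cast; ring)
  have hθF := hasSum_natCast_mul_of_hasSum_derivCoeff hF'
  have hlhs : HasSum (fun n => (n + 1) * (n + γ) * c (n + 1) * z ^ n) (z * F'' + γ * F') := by
    convert hθF'.add (hF'.mul_left γ) using 2 with n
    simp only [derivCoeff]; ring
  have hrhs : HasSum (fun n => (n + a) * (n + b) * c n * z ^ n)
      (z * (z * F'') + ((a + b + 1) * (z * F') + a * b * F)) := by
    convert hθθF.add ((hθF.mul_left (a + b + 1)).add (hF.mul_left (a * b))) using 2 with n
    ring
  simp_rw [hrec] at hlhs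
  linear_combination hlhs.unique hrhs

noncomputable def hypCoeff (a b c : ℝ) (n : ℕ) : ℝ :=
  (∏ i ∈ Finset.range n, (a + i)) * (∏ i ∈ Finset.range n, (b + i)) /
    ((∏ i ∈ Finset.range n, (c + i)) * (Nat.factorial n))

lemma hypgeo_eq_powerSum (a b c : ℝ) : hypgeo a b c = powerSum (hypCoeff a b c) := rfl

lemma hypCoeff_eq_prod (a b c : ℝ) (n : ℕ) :
    hypCoeff a b c n = ∏ i ∈ Finset.range n, (a + i) * (b + i) / ((c + i) * (i + 1)) := by
  rw [Finset.prod_div_distrib, Finset.prod_mul_distrib, Finset.prod_mul_distrib, hypCoeff,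
    ← Finset.prod_range_add_one_eq_factorial]
  push_cast
  rfl

lemma hypCoeff_recurrence {a b c : ℝ} (hc : ∀ n : ℕ, c + n ≠ 0) (n : ℕ) :
    (n + 1) * (n + c) * hypCoeff a b c (n + 1) = (n + a) * (n + b) * hypCoeff a b c n := by
  rw [hypCoeff_eq_prod, hypCoeff_eq_prod, Finset.prod_range_succ]
  have := hc n
  field_simp
  ring

lemma abs_hypCoeff_le_one {a b c : ℝ} (ha : 0 ≤ a) (ha1 : a ≤ 1) (hb : 0 ≤ b) (hbc : b ≤ c)
    (n : ℕ) : |hypCoeff a b c n| ≤ 1 := by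
  have hfactor : ∀ i : ℕ, 0 ≤ (a + i) * (b + i) / ((c + i) * (i + 1)) ∧
      (a + i) * (b + i) / ((c + i) * (i + 1)) ≤ 1 := fun i => by
    have hi : (0 : ℝ) ≤ i := i.cast_nonneg
    refine ⟨div_nonneg (by nlinarith) (by nlinarith), div_le_one_of_le₀ ?_ (by nlinarith)⟩
    rw [mul_comm (c + i)]
    exact mul_le_mul (by linarith) (by linarith) (by linarith) (by linarith)
  rw [hypCoeff_eq_prod, abs_of_nonneg (Finset.prod_nonneg fun i _ => (hfactor i).1)]
  exact Finset.prod_le_one (fun i _ => (hfactor i).1) fun i _ => (hfactor i).2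

theorem abs_le_mul_of_singular_deriv_le {v w : ℝ → ℝ} {a M x : ℝ} (ha : 1 ≤ a) (hx : 0 < x)
    (hv : ∀ t ∈ Icc 0 x, HasDerivAt v (w t) t) (hv0 : v 0 = 0)
    (hM : ∀ t ∈ Ioc 0 x, |w t + a / t * v t| ≤ M) : |v x| ≤ M * x := by
  have ha0 : a ≠ 0 := by positivity
  -- `(t ^ a * v t)' = t ^ a * (w t + a / t * v t)`, which is at most `x ^ a * M` on `(0, x]`
  set W' : ℝ → ℝ := fun t => a * t ^ (a - 1) * v t + t ^ a * w t
  have hW : ∀ t ∈ Icc 0 x, HasDerivWithinAt (fun t => t ^ a * v t) (W' t) (Icc 0 x) t :=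
    fun t ht => ((Real.hasDerivAt_rpow_const (Or.inr ha)).mul (hv t ht)).hasDerivWithinAt
  have hW'0 : W' 0 = 0 := by simp [W', hv0, Real.zero_rpow ha0]
  have hbound : ∀ t ∈ Ico 0 x, ‖W' t‖ ≤ x ^ a * M := by
    rintro t ⟨ht0, htx⟩
    rcases ht0.eq_or_lt with rfl | htpos
    · rw [hW'0, norm_zero]
      exact mul_nonneg (by positivity) ((abs_nonneg _).trans (hM x ⟨hx, le_rfl⟩))
    have hW't : W' t = t ^ a * (w t + a / t * v t) := by
      simp only [W', Real.rpow_sub_one htpos.ne']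
      field_simp
      ring
    rw [hW't, Real.norm_eq_abs, abs_mul, abs_of_nonneg (by positivity)]
    exact mul_le_mul (Real.rpow_le_rpow ht0 htx.le (by linarith)) (hM t ⟨htpos, htx.le⟩)
      (abs_nonneg _) (by positivity)
  have hmvt := norm_image_sub_le_of_norm_deriv_le_segment' hW hbound x ⟨hx.le, le_rfl⟩
  rw [Real.zero_rpow ha0, zero_mul, sub_zero, sub_zero, Real.norm_eq_abs, abs_mul,
    abs_of_pos (by positivity), mul_assoc] at hmvt
  exact le_of_mul_le_mul_left hmvt (by positivity)

theorem eq_zero_of_singular_ode_of_nonneg {u v w : ℝ → ℝ} {a K x₀ : ℝ} (ha : 1 ≤ a) (hK : 0 ≤ K)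
    (hsmall : 2 * K * x₀ < 1)
    (hu : ∀ x ∈ Icc 0 x₀, HasDerivAt u (v x) x) (hv : ∀ x ∈ Icc 0 x₀, HasDerivAt v (w x) x)
    (hode : ∀ x ∈ Ioc 0 x₀, |w x + a / x * v x| ≤ K * (|v x| + |u x| / x))
    (hu0 : u 0 = 0) (hv0 : v 0 = 0) :
    ∀ x ∈ Icc 0 x₀, u x = 0 := by
  intro x hx
  have hx₀ : 0 ≤ x₀ := hx.1.trans hx.2
  obtain ⟨m, hm, hmax⟩ := isCompact_Icc.exists_isMaxOn (nonempty_Icc.2 hx₀)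
    (fun t ht => (hv t ht).continuousAt.continuousWithinAt.abs : ContinuousOn (|v ·|) (Icc 0 x₀))
  set N := |v m|
  have hvN : ∀ t ∈ Icc 0 x₀, |v t| ≤ N := fun t ht => hmax ht
  have huN : ∀ t ∈ Icc 0 x₀, |u t| ≤ N * t := fun t ht => by
    simpa [hu0] using norm_image_sub_le_of_norm_deriv_le_segment'
      (fun s hs => (hu s hs).hasDerivWithinAt) (fun s hs => hvN s (Ico_subset_Icc_self hs)) t ht
  have hv2N : ∀ t ∈ Icc 0 x₀, |v t| ≤ 2 * K * N * t := by
    rintro t ⟨ht0, htx⟩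
    rcases ht0.eq_or_lt with rfl | htpos
    · simp [hv0]
    refine abs_le_mul_of_singular_deriv_le ha htpos
      (fun s hs => hv s ⟨hs.1, hs.2.trans htx⟩) hv0 fun s hs => ?_
    have hs' : s ∈ Icc 0 x₀ := ⟨hs.1.le, hs.2.trans htx⟩
    calc |w s + a / s * v s| ≤ K * (|v s| + |u s| / s) := hode s ⟨hs.1, hs.2.trans htx⟩
      _ ≤ K * (N + N) := by
          gcongr
          · exact hvN s hs'
          · exact (div_le_iff₀ hs.1).2 (huN s hs')
      _ = 2 * K * N := by ring
  -- at the maximum point `N ≤ 2 K x₀ N`, and `2 K x₀ < 1`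
  have hN : N = 0 := by
    have := hv2N m hm
    nlinarith [abs_nonneg (v m), hm.2, mul_nonneg hK (abs_nonneg (v m))]
  simpa [hN] using huN x hx

theorem eq_zero_of_singular_ode {u v w p q : ℝ → ℝ} {a K x₀ : ℝ} (ha : 1 ≤ a) (hK : 0 ≤ K)
    (hsmall : 2 * K * x₀ < 1)
    (hu : ∀ x ∈ Icc (-x₀) x₀, HasDerivAt u (v x) x) (hv : ∀ x ∈ Icc (-x₀) x₀, HasDerivAt v (w x) x)
    (hw : ∀ x ∈ Icc (-x₀) x₀, x ≠ 0 → w x = p x * v x + q x * u x)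
    (hp : ∀ x ∈ Icc (-x₀) x₀, x ≠ 0 → |p x + a / x| ≤ K)
    (hq : ∀ x ∈ Icc (-x₀) x₀, x ≠ 0 → |x * q x| ≤ K)
    (hu0 : u 0 = 0) (hv0 : v 0 = 0) :
    ∀ x ∈ Icc (-x₀) x₀, u x = 0 := by
  have hode : ∀ x ∈ Icc (-x₀) x₀, x ≠ 0 → |w x + a / x * v x| ≤ K * (|v x| + |u x| / |x|) := by
    intro x hx hx0
    have hsplit : w x + a / x * v x = (p x + a / x) * v x + x * q x * (u x / x) := by
      rw [hw x hx hx0]; field_simp; ring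
    calc |w x + a / x * v x| ≤ |p x + a / x| * |v x| + |x * q x| * (|u x| / |x|) := by
          rw [hsplit, ← abs_div, ← abs_mul, ← abs_mul]; exact abs_add_le _ _
      _ ≤ K * |v x| + K * (|u x| / |x|) := by
          gcongr
          · exact hp x hx hx0
          · exact hq x hx hx0
      _ = K * (|v x| + |u x| / |x|) := by ring
  have hmem : ∀ x ∈ Icc 0 x₀, x ∈ Icc (-x₀) x₀ ∧ -x ∈ Icc (-x₀) x₀ := fun x hx =>
    ⟨⟨by linarith [hx.1, hx.2], hx.2⟩, ⟨by linarith [hx.2], by linarith [hx.1, hx.2]⟩⟩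
  have hpos : ∀ x ∈ Icc 0 x₀, u x = 0 := by
    refine eq_zero_of_singular_ode_of_nonneg ha hK hsmall (fun x hx => hu x (hmem x hx).1)
      (fun x hx => hv x (hmem x hx).1) (fun x hx => ?_) hu0 hv0
    simpa [abs_of_pos hx.1] using hode x (hmem x (Ioc_subset_Icc_self hx)).1 hx.1.ne'
  have hneg : ∀ x ∈ Icc 0 x₀, u (-x) = 0 := by
    refine eq_zero_of_singular_ode_of_nonneg (u := fun x => u (-x)) (v := fun x => -v (-x))
      (w := fun x => w (-x)) ha hK hsmall (fun x hx => ?_) (fun x hx => ?_) (fun x hx => ?_)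
      (by simpa using hu0) (by simpa using hv0)
    · exact ((hu (-x) (hmem x hx).2).comp x (hasDerivAt_neg x)).congr_deriv (by ring)
    · exact ((hv (-x) (hmem x hx).2).comp x (hasDerivAt_neg x)).neg.congr_deriv (by ring)
    · have := hode (-x) (hmem x (Ioc_subset_Icc_self hx)).2 (neg_ne_zero.2 hx.1.ne')
      rwa [abs_neg, abs_of_pos hx.1, div_neg, neg_mul, ← mul_neg, ← abs_neg (v (-x))] at this
  intro x hx
  rcases le_total 0 x with h | h
  · exact hpos x ⟨h, hx.2⟩
  · simpa using hneg (-x) ⟨by linarith, by linarith [hx.1]⟩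

noncomputable def phi (x : ℝ) : ℝ := x * (x + 4) ^ 3 / (4 * (2 * x - 1) ^ 3)

noncomputable def phi' (x : ℝ) : ℝ := (x + 4) ^ 2 * (x ^ 2 - 10 * x - 2) / (2 * (2 * x - 1) ^ 4)

noncomputable def phi'' (x : ℝ) : ℝ := 27 * (5 * x + 2) * (x + 4) / (2 * x - 1) ^ 5

noncomputable def rhs (x : ℝ) : ℝ := (1 / (1 + x / 4)) * (1 - 2 * x) ^ ((3 : ℝ) / 4)

noncomputable def rhsLogDeriv (x : ℝ) : ℝ := -3 / (2 * (1 - 2 * x)) - 1 / (4 + x)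

noncomputable def rhsLogDeriv' (x : ℝ) : ℝ := -3 / (1 - 2 * x) ^ 2 + 1 / (4 + x) ^ 2

noncomputable def odeP (x : ℝ) : ℝ := -4 / (3 * x) + (14 - x) / ((2 * x - 1) * (x + 4))

noncomputable def odeQ (x : ℝ) : ℝ := -7 * (x + 4) / (12 * x * (2 * x - 1) ^ 2)

section Derivatives

variable {x : ℝ}

lemma hasDerivAt_phi (hx : 2 * x - 1 ≠ 0) : HasDerivAt phi (phi' x) x := by
  have h := ((hasDerivAt_id' x).fun_mul (((hasDerivAt_id' x).add_const 4).fun_pow 3)).fun_div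
    ((((hasDerivAt_id' x).const_mul 2).sub_const 1).fun_pow 3 |>.const_mul 4) (by positivity)
  refine h.congr_deriv ?_
  rw [phi', div_eq_div_iff (by positivity) (by positivity)]
  ring

lemma hasDerivAt_phi' (hx : 2 * x - 1 ≠ 0) : HasDerivAt phi' (phi'' x) x := by
  have hquad :=
    (((hasDerivAt_id' x).fun_pow 2).fun_sub ((hasDerivAt_id' x).const_mul 10)).sub_const 2
  have h := ((((hasDerivAt_id' x).add_const 4).fun_pow 2).fun_mul hquad).fun_div
    ((((hasDerivAt_id' x).const_mul 2).sub_const 1).fun_pow 4 |>.const_mul 2) (by positivity)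
  refine h.congr_deriv ?_
  rw [phi'', div_eq_div_iff (by positivity) (by positivity)]
  ring

lemma hasDerivAt_rhsLogDeriv (h1 : 1 - 2 * x ≠ 0) (h4 : 4 + x ≠ 0) :
    HasDerivAt rhsLogDeriv (rhsLogDeriv' x) x := by
  have h := ((hasDerivAt_const x (-3 : ℝ)).fun_div
    (((hasDerivAt_id' x).const_mul 2).const_sub 1 |>.const_mul 2) (by positivity)).sub
    ((hasDerivAt_const x (1 : ℝ)).fun_div ((hasDerivAt_id' x).const_add 4) h4)
  refine h.congr_deriv ?_
  rw [rhsLogDeriv']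
  field_simp
  ring

lemma hasDerivAt_rhs (h1 : 0 < 1 - 2 * x) (h4 : 0 < 4 + x) :
    HasDerivAt rhs (rhsLogDeriv x * rhs x) x := by
  have h := ((hasDerivAt_const x (1 : ℝ)).fun_div (((hasDerivAt_id' x).div_const 4).const_add 1)
    (by linarith)).fun_mul
    ((((hasDerivAt_id' x).const_mul 2).const_sub 1).rpow_const (p := (3 : ℝ) / 4) (Or.inl h1.ne'))
  refine h.congr_deriv ?_
  rw [rhsLogDeriv, rhs, Real.rpow_sub_one h1.ne']
  field_simp
  ring

end Derivatives

section Identities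

variable {x : ℝ}

lemma phi_pullback_odeQ (hx : x ≠ 0) (h2 : 2 * x - 1 ≠ 0) :
    7 / 48 * phi' x ^ 2 = phi x * (1 - phi x) * odeQ x := by
  have h2' : x * 2 - 1 ≠ 0 := by contrapose! h2; linarith
  rw [phi, phi', odeQ]
  field_simp
  ring

lemma phi_pullback_odeP (hx : x ≠ 0) (h2 : 2 * x - 1 ≠ 0) (h4 : x + 4 ≠ 0) :
    (11 / 6 * phi x - 4 / 3) * phi' x ^ 2 + phi x * (1 - phi x) * (phi'' x - odeP x * phi' x)
      = 0 := by
  have h2' : x * 2 - 1 ≠ 0 := by contrapose! h2; linarith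
  rw [phi, phi', phi'', odeP]
  field_simp
  ring

lemma rhsLogDeriv_riccati (hx : x ≠ 0) (h2 : 2 * x - 1 ≠ 0) (h4 : x + 4 ≠ 0) :
    rhsLogDeriv' x + rhsLogDeriv x ^ 2 = odeP x * rhsLogDeriv x + odeQ x := by
  have h2' : 1 - 2 * x ≠ 0 := by contrapose! h2; linarith
  have h4' : 4 + x ≠ 0 := by contrapose! h4; linarith
  rw [rhsLogDeriv, rhsLogDeriv', odeP, odeQ]
  field_simp
  ring

end Identities

section Bounds

variable {x : ℝ}

lemma abs_phi_lt_one (hx : x ∈ Icc (-(1 / 100)) (1 / 100)) : |phi x| < 1 := by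
  obtain ⟨hx1, hx2⟩ := hx
  have hden : 4 * (49 / 50) ^ 3 ≤ |4 * (2 * x - 1) ^ 3| := by
    rw [abs_mul, abs_pow, abs_of_neg (by linarith : 2 * x - 1 < 0), abs_of_pos four_pos]
    gcongr
    linarith
  have hnum : |x * (x + 4) ^ 3| ≤ 1 / 100 * 5 ^ 3 := by
    have h4 : 0 < x + 4 := by linarith
    rw [abs_mul, abs_pow, abs_of_pos h4]
    exact mul_le_mul (abs_le.2 ⟨hx1, hx2⟩) (pow_le_pow_left₀ h4.le (by linarith) 3) (by positivity)
      (by norm_num)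
  rw [phi, abs_div, div_lt_one (by linarith)]
  linarith

lemma abs_odeP_add_le (hx : x ∈ Icc (-(1 / 100)) (1 / 100)) (h0 : x ≠ 0) :
    |odeP x + 4 / 3 / x| ≤ 4 := by
  obtain ⟨hx1, hx2⟩ := hx
  have h2 : 2 * x - 1 < 0 := by linarith
  have h4 : 0 < x + 4 := by linarith
  have hP : odeP x + 4 / 3 / x = (14 - x) / ((2 * x - 1) * (x + 4)) := by
    rw [odeP]; field_simp; ring
  rw [hP, abs_div, abs_mul, abs_of_neg h2, abs_of_pos h4, abs_of_pos (by linarith),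
    div_le_iff₀ (by nlinarith)]
  nlinarith

lemma abs_mul_odeQ_le (hx : x ∈ Icc (-(1 / 100)) (1 / 100)) (h0 : x ≠ 0) : |x * odeQ x| ≤ 4 := by
  obtain ⟨hx1, hx2⟩ := hx
  have h2 : 2 * x - 1 ≠ 0 := by linarith
  have hQ : x * odeQ x = -(7 * (x + 4) / (12 * (2 * x - 1) ^ 2)) := by
    rw [odeQ]; field_simp
  rw [hQ, abs_neg, abs_of_pos (div_pos (by linarith) (by positivity)), div_le_iff₀ (by positivity)]
  nlinarith

end Bounds

lemma powerSum_zero (c : ℕ → ℝ) : powerSum c 0 = c 0 := by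
  rw [powerSum, tsum_eq_single 0 fun n hn => by simp [hn]]
  simp

local notation "c₀" => hypCoeff (1 / 4) (7 / 12) (4 / 3)

lemma polyGrowth_c₀ : PolyGrowth c₀ :=
  ⟨1, 0, fun n => by
    rw [pow_zero, mul_one]
    exact abs_hypCoeff_le_one (by norm_num) (by norm_num) (by norm_num) (by norm_num) n⟩

lemma hypgeo_comp_phi_ode {x : ℝ} (hx : x ≠ 0) (h2 : 2 * x - 1 ≠ 0) (h4 : x + 4 ≠ 0)
    (hz : |phi x| < 1) :
    powerSum (derivCoeff (derivCoeff c₀)) (phi x) * phi' x ^ 2 +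
        powerSum (derivCoeff c₀) (phi x) * phi'' x =
      odeP x * (powerSum (derivCoeff c₀) (phi x) * phi' x) + odeQ x * powerSum c₀ (phi x) := by
  have hode : phi x * (1 - phi x) * powerSum (derivCoeff (derivCoeff c₀)) (phi x)
      + (4 / 3 - (1 / 4 + 7 / 12 + 1) * phi x) * powerSum (derivCoeff c₀) (phi x)
      - 1 / 4 * (7 / 12) * powerSum c₀ (phi x) = 0 :=
    hypergeometric_ode_of_hasSum (hypCoeff_recurrence (fun n => by positivity))
    (polyGrowth_c₀.summable hz).hasSum (polyGrowth_c₀.derivCoeff.summable hz).hasSum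
    (polyGrowth_c₀.derivCoeff.derivCoeff.summable hz).hasSum
  have hphi : phi x * (1 - phi x) ≠ 0 := by
    refine mul_ne_zero ?_ (sub_ne_zero.2 (ne_of_lt (lt_of_abs_lt hz)).symm)
    rw [phi]
    exact div_ne_zero (mul_ne_zero hx (pow_ne_zero 3 h4)) (by positivity)
  refine mul_left_cancel₀ hphi ?_
  linear_combination phi' x ^ 2 * hode
    + powerSum (derivCoeff c₀) (phi x) * phi_pullback_odeP hx h2 h4
    + powerSum c₀ (phi x) * phi_pullback_odeQ hx h2

theorem hypgeo_comp_phi_eq_rhs :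
    ∀ x ∈ Icc (-(1 / 100)) (1 / 100), hypgeo (1 / 4) (7 / 12) (4 / 3) (phi x) = rhs x := by
  have hdom : ∀ x ∈ Icc (-(1 / 100) : ℝ) (1 / 100), 2 * x - 1 ≠ 0 ∧ x + 4 ≠ 0 ∧
      0 < 1 - 2 * x ∧ 0 < 4 + x := fun x hx => by
    obtain ⟨h1, h2⟩ := hx
    exact ⟨by linarith, by linarith, by linarith, by linarith⟩
  have hF := polyGrowth_c₀
  intro x hx
  rw [hypgeo_eq_powerSum]
  refine sub_eq_zero.1 (eq_zero_of_singular_ode (x₀ := 1 / 100) (K := 4) (a := 4 / 3)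
    (u := fun x => powerSum c₀ (phi x) - rhs x)
    (v := fun x => powerSum (derivCoeff c₀) (phi x) * phi' x - rhsLogDeriv x * rhs x)
    (w := fun x => powerSum (derivCoeff (derivCoeff c₀)) (phi x) * phi' x ^ 2
      + powerSum (derivCoeff c₀) (phi x) * phi'' x
      - (rhsLogDeriv' x * rhs x + rhsLogDeriv x * (rhsLogDeriv x * rhs x)))
    (p := odeP) (q := odeQ) (by norm_num) (by norm_num) (by norm_num)
    (fun x hx => ?_) (fun x hx => ?_) (fun x hx h0 => ?_)
    (fun _ => abs_odeP_add_le) (fun _ => abs_mul_odeQ_le) ?_ ?_ x hx)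
  · obtain ⟨h2, -, h1, h4⟩ := hdom x hx
    exact ((hF.hasDerivAt_powerSum (abs_phi_lt_one hx)).comp x (hasDerivAt_phi h2)).sub
      (hasDerivAt_rhs h1 h4)
  · obtain ⟨h2, -, h1, h4⟩ := hdom x hx
    refine ((((hF.derivCoeff.hasDerivAt_powerSum (abs_phi_lt_one hx)).comp x
      (hasDerivAt_phi h2)).mul (hasDerivAt_phi' h2)).sub
      ((hasDerivAt_rhsLogDeriv h1.ne' h4.ne').mul (hasDerivAt_rhs h1 h4))).congr_deriv ?_
    simp only [Function.comp_apply]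
    ring
  · obtain ⟨h2, h4, -, -⟩ := hdom x hx
    linear_combination hypgeo_comp_phi_ode h0 h2 h4 (abs_phi_lt_one hx)
      - rhs x * rhsLogDeriv_riccati h0 h2 h4
  · norm_num [phi, rhs, powerSum_zero, hypCoeff]
  · norm_num [phi, phi', rhs, rhsLogDeriv, powerSum_zero, derivCoeff, hypCoeff]

theorem stmt2 : ∃ ε > 0, ∀ x : ℝ, |x| < ε →
    hypgeo (1/4) (7/12) (4/3) (x * (x + 4)^3 / (4 * (2*x - 1)^3)) =
      (1 / (1 + x/4)) * (1 - 2*x) ^ ((3 : ℝ)/4) :=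
  ⟨1 / 100, by norm_num, fun x hx => hypgeo_comp_phi_eq_rhs x (abs_le.1 hx.le)⟩
end

section
/- There exists ε > 0 such that for all real x with |x| < ε, F(1/2, -1/6; 2/3; x(x+2)^3 / (2x+1)^3) = (1+2x)^(-1/2). -/
open Real

/-!
`F = ₂F₁(1/2, -1/6; 2/3; ·)` satisfies the hypergeometric equation
`z (1 - z) F'' + (c - (a + b + 1) z) F' - a b F = 0`, which is the recursion of its Taylor
coefficients read off termwise. Pulled back along `φ x = x (x + 2)³ / (2x + 1)³` it becomes a
second-order equation for `h = F ∘ φ` which factors through `V = (1 + 2x) h' + h`: it reads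
`x P V' + Q V = 0` with `P 0 = 64` and `Q 0 = 128/3`. At this regular singular point the indicial
root `-Q 0 / P 0 = -2/3` is not a natural number, so the analytic function `V` vanishes near `0`.
Then `h² (1 + 2x)` has derivative `2 h V = 0`, so it stays equal to its value `1` at `0`, and
`h = (1 + 2x)^(-1/2)`.
-/

open Filter Topology FormalMultilinearSeries

theorem ascPochhammer_eval_eq_prod_range {S : Type*} [CommSemiring S] (n : ℕ) (s : S) :
    (ascPochhammer S n).eval s = ∏ i ∈ Finset.range n, (s + i) := by
  induction n with
  | zero => simp
  | succ n ih => rw [ascPochhammer_succ_eval, ih, Finset.prod_range_succ]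

theorem hypgeo_eq_ordinaryHypergeometric (a b c z : ℝ) : hypgeo a b c z = ₂F₁ a b c z := by
  rw [hypgeo, ordinaryHypergeometric_eq_tsum]
  congr! 2 with n
  simp only [ascPochhammer_eval_eq_prod_range, smul_eq_mul]
  ring

theorem HasSum.mul_pow_of_succ {R : Type*} [CommRing R] [TopologicalSpace R] [IsTopologicalRing R]
    {a : ℕ → R} {z S : R} (h : HasSum (fun n => a (n + 1) * z ^ n) S) :
    HasSum (fun n => a n * z ^ n) (a 0 + z * S) := by
  rw [← hasSum_nat_add_iff' 1]
  simpa [pow_succ, mul_comm, mul_left_comm, mul_assoc] using h.mul_left z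

section PowerSeries

variable {𝕜 : Type*} [NontriviallyNormedField 𝕜] {c : ℕ → 𝕜} {f : 𝕜 → 𝕜} {r : ENNReal}

theorem HasFPowerSeriesOnBall.hasSum_ofScalars (hf : HasFPowerSeriesOnBall f (ofScalars 𝕜 c) 0 r)
    {z : 𝕜} (hz : z ∈ Metric.eball 0 r) : HasSum (fun n => c n * z ^ n) (f z) := by
  simpa [ofScalars_apply_eq, mul_comm] using hf.hasSum_sub hz

theorem HasFPowerSeriesOnBall.deriv_ofScalars [CompleteSpace 𝕜]
    (hf : HasFPowerSeriesOnBall f (ofScalars 𝕜 c) 0 r) :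
    HasFPowerSeriesOnBall (deriv f) (ofScalars 𝕜 fun n => (n + 1) * c (n + 1)) 0 r := by
  convert (ContinuousLinearMap.apply 𝕜 𝕜 1).comp_hasFPowerSeriesOnBall hf.fderiv using 1
  · ext z
    simp only [Function.comp_apply, ContinuousLinearMap.apply_apply, fderiv_eq_smul_deriv,
      smul_eq_mul, one_mul]
  · ext n
    simp only [apply_eq_prod_smul_coeff, Finset.prod_const_one, coeff_ofScalars, smul_eq_mul,
      one_mul, ContinuousLinearMap.compFormalMultilinearSeries_apply,
      ContinuousLinearMap.compContinuousMultilinearMap_coe, Function.comp_apply, one_smul,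
      ContinuousLinearMap.apply_apply, derivSeries_coeff_one, nsmul_eq_mul, Nat.cast_add,
      Nat.cast_one]

end PowerSeries

section Hypergeometric

variable {𝕂 : Type*} [RCLike 𝕂] {a b c : 𝕂}

theorem hasFPowerSeriesOnBall_ordinaryHypergeometric
    (h : 0 < (ordinaryHypergeometricSeries 𝕂 a b c).radius) :
    HasFPowerSeriesOnBall (₂F₁ a b c : 𝕂 → 𝕂)
      (ofScalars 𝕂 (ordinaryHypergeometricCoefficient a b c)) 0
      (ordinaryHypergeometricSeries 𝕂 a b c).radius :=
  (ordinaryHypergeometricSeries 𝕂 a b c).hasFPowerSeriesOnBall h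

theorem analyticOnNhd_ordinaryHypergeometric :
    AnalyticOnNhd 𝕂 (₂F₁ a b c : 𝕂 → 𝕂)
      (Metric.eball (0 : 𝕂) (ordinaryHypergeometricSeries 𝕂 a b c).radius) := fun _ hz =>
  (hasFPowerSeriesOnBall_ordinaryHypergeometric (Metric.pos_of_mem_eball hz)).analyticOnNhd _ hz

theorem ordinaryHypergeometricCoefficient_succ (hc : ∀ k : ℕ, c ≠ -k) (n : ℕ) :
    (n + 1) * (n + c) * ordinaryHypergeometricCoefficient a b c (n + 1) =
      (n + a) * (n + b) * ordinaryHypergeometricCoefficient a b c n := by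
  have hcn : c + n ≠ 0 := fun h => hc n (eq_neg_of_add_eq_zero_left h)
  have hpoch : (ascPochhammer 𝕂 n).eval c ≠ 0 := by
    rw [Ne, ascPochhammer_eval_eq_zero_iff]
    rintro ⟨k, -, hk⟩
    exact hc k (by rw [hk, neg_neg])
  simp only [ordinaryHypergeometricCoefficient, ascPochhammer_succ_eval, Nat.factorial_succ]
  push_cast
  field_simp
  ring

theorem ordinaryHypergeometric_ode (hc : ∀ k : ℕ, c ≠ -k) {z : 𝕂}
    (hz : z ∈ Metric.eball (0 : 𝕂) (ordinaryHypergeometricSeries 𝕂 a b c).radius) :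
    z * (1 - z) * deriv (deriv (₂F₁ a b c)) z + (c - (a + b + 1) * z) * deriv (₂F₁ a b c) z
      - a * b * ₂F₁ a b c z = 0 := by
  have hF := hasFPowerSeriesOnBall_ordinaryHypergeometric (Metric.pos_of_mem_eball hz)
  have sF := hF.hasSum_ofScalars hz
  have sF' := hF.deriv_ofScalars.hasSum_ofScalars hz
  have sF'' := hF.deriv_ofScalars.deriv_ofScalars.hasSum_ofScalars hz
  set C := ordinaryHypergeometricCoefficient a b c
  set F : 𝕂 → 𝕂 := ₂F₁ a b c
  have szF' : HasSum (fun n => n * C n * z ^ n) (z * deriv F z) := by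
    convert HasSum.mul_pow_of_succ (a := fun n => n * C n) (by push_cast; exact sF') using 1
    simp
  have szF'' : HasSum (fun n => n * ((n + 1) * C (n + 1)) * z ^ n) (z * deriv (deriv F) z) := by
    convert HasSum.mul_pow_of_succ (a := fun n => n * ((n + 1) * C (n + 1)))
      (by push_cast at sF'' ⊢; exact sF'') using 1
    simp
  have sz2F'' : HasSum (fun n => n * (n - 1) * C n * z ^ n) (z * (z * deriv (deriv F) z)) := by
    convert HasSum.mul_pow_of_succ (a := fun n => n * (n - 1) * C n)
      (by convert szF'' using 3; push_cast; ring) using 1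
    simp
  have lhs := szF''.add (sF'.mul_left c)
  have rhs := (sz2F''.add (szF'.mul_left (a + b + 1))).add (sF.mul_left (a * b))
  have key := lhs.unique (rhs.congr_fun fun n => ?_)
  · linear_combination key
  · linear_combination z ^ n * ordinaryHypergeometricCoefficient_succ (a := a) (b := b) hc n

end Hypergeometric

theorem AnalyticAt.eventually_eq_zero_of_regularSingular {𝕜 : Type*} [NontriviallyNormedField 𝕜]
    [CompleteSpace 𝕜] {V P Q : 𝕜 → 𝕜} (hV : AnalyticAt 𝕜 V 0) (hP : ContinuousAt P 0)
    (hQ : ContinuousAt Q 0) (hres : ∀ n : ℕ, n * P 0 + Q 0 ≠ 0)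
    (hode : ∀ᶠ x in 𝓝 0, x * P x * deriv V x + Q x * V x = 0) :
    ∀ᶠ x in 𝓝 0, V x = 0 := by
  rw [← analyticOrderAt_eq_top]
  by_contra hfin
  obtain ⟨n, hn⟩ := ENat.ne_top_iff_exists.mp hfin
  obtain ⟨g, hg, hg0, hVg⟩ := hV.analyticOrderAt_eq_natCast.mp hn.symm
  simp only [sub_zero, smul_eq_mul] at hVg
  -- dividing the equation for `V = x ^ n * g` by `x ^ n` leaves `k = 0`,
  -- and `k 0 = (n P 0 + Q 0) g 0`
  set k : 𝕜 → 𝕜 := fun x => P x * (n * g x + x * deriv g x) + Q x * g x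
  have hk_cont : ContinuousAt k 0 := by
    obtain ⟨s, hs, hgs⟩ := hg.exists_mem_nhds_analyticOnNhd
    have hg' : ContinuousAt (deriv g) 0 := (hgs.deriv 0 (mem_of_mem_nhds hs)).continuousAt
    have := hg.continuousAt
    fun_prop
  have hk : ∀ᶠ x in 𝓝[≠] 0, k x = 0 := by
    filter_upwards [nhdsWithin_le_nhds
      (hode.and (hVg.eventually_nhds.and hg.eventually_analyticAt)), self_mem_nhdsWithin]
      with x hx hx0
    obtain ⟨hx, hVx, hgx⟩ := hx
    replace hVx : V =ᶠ[𝓝 x] fun z => z ^ n * g z := hVx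
    have hderiv : deriv V x = n * x ^ (n - 1) * g x + x ^ n * deriv g x := by
      rw [hVx.deriv_eq]
      exact ((hasDerivAt_pow n x).mul hgx.differentiableAt.hasDerivAt).deriv
    have hshift : x * (n * x ^ (n - 1)) = n * x ^ n := by
      rcases n with _ | n
      · simp
      · simp [pow_succ]; ring
    have : x ^ n * k x = 0 := by
      rw [← hx, hderiv, hVx.eq_of_nhds]
      linear_combination (-(P x) * g x) * hshift
    exact (mul_eq_zero.mp this).resolve_left (pow_ne_zero n hx0)
  have hk0 : k 0 = 0 :=
    tendsto_nhds_unique (hk_cont.tendsto.mono_left nhdsWithin_le_nhds)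
      (tendsto_const_nhds.congr' (hk.mono fun x hx => hx.symm))
  refine hres n ((mul_eq_zero.mp ?_).resolve_right hg0)
  simp only [k, zero_mul, add_zero] at hk0
  linear_combination hk0

theorem eventually_eq_of_hasDerivAt_zero {𝕜 G : Type*} [RCLike 𝕜] [NormedAddCommGroup G]
    [NormedSpace 𝕜 G] {f : 𝕜 → G} {x₀ : 𝕜} (hf : ∀ᶠ x in 𝓝 x₀, HasDerivAt f 0 x) :
    ∀ᶠ x in 𝓝 x₀, f x = f x₀ := by
  obtain ⟨ε, hε, hball⟩ := Metric.eventually_nhds_iff_ball.mp hf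
  filter_upwards [Metric.ball_mem_nhds x₀ hε] with x hx
  exact Metric.isOpen_ball.is_const_of_deriv_eq_zero (convex_ball x₀ ε).isPreconnected
    (fun y hy => (hball y hy).differentiableAt.differentiableWithinAt)
    (fun y hy => (hball y hy).deriv) hx (Metric.mem_ball_self hε)

theorem eq_rpow_neg_half_of_sq_mul_eq_one {y t : ℝ} (hy : 0 ≤ y) (h : y ^ 2 * t = 1) :
    y = t ^ (-1 / 2 : ℝ) := by
  have ht : 0 ≤ t := by nlinarith [sq_nonneg y]
  rw [show (-1 / 2 : ℝ) = -(1 / 2) by norm_num, Real.rpow_neg ht, ← Real.sqrt_eq_rpow]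
  refine eq_inv_of_mul_eq_one_left ?_
  rw [← Real.sqrt_sq hy, ← Real.sqrt_mul (sq_nonneg y), h, Real.sqrt_one]

section CubicTransformation

noncomputable def cubicMap (x : ℝ) : ℝ := x * (x + 2) ^ 3 / (2 * x + 1) ^ 3

noncomputable def cubicMapDeriv (x : ℝ) : ℝ := 2 * ((x + 2) * (x - 1)) ^ 2 / (2 * x + 1) ^ 4

noncomputable def cubicMapDeriv2 (x : ℝ) : ℝ := 36 * ((x + 2) * (x - 1)) / (2 * x + 1) ^ 5

noncomputable def cubicPullback (x : ℝ) : ℝ := ₂F₁ (1 / 2 : ℝ) (-1 / 6) (2 / 3) (cubicMap x)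

noncomputable def cubicPullbackDeriv (x : ℝ) : ℝ :=
  deriv (₂F₁ (1 / 2 : ℝ) (-1 / 6) (2 / 3)) (cubicMap x) * cubicMapDeriv x

noncomputable def cubicPullbackDeriv2 (x : ℝ) : ℝ :=
  deriv (deriv (₂F₁ (1 / 2 : ℝ) (-1 / 6) (2 / 3))) (cubicMap x) * cubicMapDeriv x ^ 2
    + deriv (₂F₁ (1 / 2 : ℝ) (-1 / 6) (2 / 3)) (cubicMap x) * cubicMapDeriv2 x

noncomputable def cubicPullbackDefect (x : ℝ) : ℝ :=
  (1 + 2 * x) * cubicPullbackDeriv x + cubicPullback x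

variable {x : ℝ}

lemma cubicMap_zero : cubicMap 0 = 0 := by simp [cubicMap]

lemma hasDerivAt_cubicMap (hx : 2 * x + 1 ≠ 0) : HasDerivAt cubicMap (cubicMapDeriv x) x := by
  have hlin : HasDerivAt (fun y : ℝ => 2 * y + 1) 2 x := by
    simpa using ((hasDerivAt_id x).const_mul 2).add_const 1
  refine (((hasDerivAt_id' x).fun_mul (((hasDerivAt_id' x).add_const 2).fun_pow 3)).fun_div
    (hlin.fun_pow 3) (pow_ne_zero 3 hx)).congr_deriv ?_
  rw [cubicMapDeriv]
  norm_num
  field_simp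
  ring

lemma hasDerivAt_cubicMapDeriv (hx : 2 * x + 1 ≠ 0) :
    HasDerivAt cubicMapDeriv (cubicMapDeriv2 x) x := by
  have hlin : HasDerivAt (fun y : ℝ => 2 * y + 1) 2 x := by
    simpa using ((hasDerivAt_id x).const_mul 2).add_const 1
  refine ((((((hasDerivAt_id' x).add_const 2).fun_mul ((hasDerivAt_id' x).sub_const 1)).fun_pow
    2).const_mul 2).fun_div (hlin.fun_pow 4) (pow_ne_zero 4 hx)).congr_deriv ?_
  rw [cubicMapDeriv2]
  field_simp
  ring

/- The bracket on the left is the hypergeometric operator for `(1/2, -1/6, 2/3)` pulled back along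
`cubicMap` and multiplied by `cubicMapDeriv x ^ 3`. It factors through `(1 + 2x) y₁ + y₀` because
`(1 + 2x)^(-1/2)` solves the pulled-back equation. -/
lemma cubicMap_factor (hx : 2 * x + 1 ≠ 0) (y₀ y₁ y₂ : ℝ) :
    (1 + 2 * x) * (cubicMap x * (1 - cubicMap x) * cubicMapDeriv x * y₂
      + ((2 / 3 - 4 / 3 * cubicMap x) * cubicMapDeriv x ^ 2
        - cubicMap x * (1 - cubicMap x) * cubicMapDeriv2 x) * y₁
      + 1 / 12 * cubicMapDeriv x ^ 3 * y₀) =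
    x * ((x + 2) ^ 3 / (2 * x + 1) ^ 3 * (1 - cubicMap x) * cubicMapDeriv x)
        * ((1 + 2 * x) * y₂ + 3 * y₁)
      + (1 + 2 * x) / 12 * cubicMapDeriv x ^ 3 * ((1 + 2 * x) * y₁ + y₀) := by
  simp only [cubicMap, cubicMapDeriv, cubicMapDeriv2]
  field_simp
  ring

lemma eventually_cubicMap_mem : ∀ᶠ x in 𝓝 0, 0 < 1 + 2 * x ∧ cubicMap x ∈
    Metric.eball (0 : ℝ) (ordinaryHypergeometricSeries ℝ (1 / 2 : ℝ) (-1 / 6) (2 / 3)).radius := by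
  have hradius : (ordinaryHypergeometricSeries ℝ (1 / 2 : ℝ) (-1 / 6) (2 / 3)).radius = 1 := by
    refine ordinaryHypergeometricSeries_radius_eq_one _ _ _ _ fun k => ?_
    have hk : (0 : ℝ) ≤ k := k.cast_nonneg
    refine ⟨by linarith, fun h => ?_, by linarith⟩
    have : ((k * 6 : ℕ) : ℝ) = 1 := by push_cast; linarith
    norm_cast at this
    omega
  refine (Tendsto.eventually_const_lt (by norm_num)
    (by fun_prop : Continuous fun x : ℝ => 1 + 2 * x).continuousAt.tendsto).and ?_
  refine ContinuousAt.preimage_mem_nhds (by unfold cubicMap; fun_prop (disch := norm_num)) ?_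
  rw [cubicMap_zero, hradius]
  exact Metric.eball_mem_nhds _ one_pos

lemma eventually_hasDerivAt_cubicPullback : ∀ᶠ x in 𝓝 0,
    HasDerivAt cubicPullback (cubicPullbackDeriv x) x ∧
      HasDerivAt cubicPullbackDeriv (cubicPullbackDeriv2 x) x := by
  filter_upwards [eventually_cubicMap_mem] with x ⟨hx, hφ⟩
  have hx' : 2 * x + 1 ≠ 0 := by linarith
  have hF := analyticOnNhd_ordinaryHypergeometric _ hφ
  refine ⟨hF.differentiableAt.hasDerivAt.comp x (hasDerivAt_cubicMap hx'), ?_⟩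
  refine ((hF.deriv.differentiableAt.hasDerivAt.comp x (hasDerivAt_cubicMap hx')).fun_mul
    (hasDerivAt_cubicMapDeriv hx')).congr_deriv ?_
  simp only [cubicPullbackDeriv2, Function.comp]
  ring

lemma eventually_cubicPullbackDefect_ode : ∀ᶠ x in 𝓝 0,
    x * ((x + 2) ^ 3 / (2 * x + 1) ^ 3 * (1 - cubicMap x) * cubicMapDeriv x)
        * deriv cubicPullbackDefect x
      + (1 + 2 * x) / 12 * cubicMapDeriv x ^ 3 * cubicPullbackDefect x = 0 := by
  filter_upwards [eventually_cubicMap_mem, eventually_hasDerivAt_cubicPullback]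
    with x ⟨hx, hφ⟩ ⟨h1, h2⟩
  have hode := ordinaryHypergeometric_ode
    (fun k => by have := k.cast_nonneg (α := ℝ); linarith) hφ
  have hV : HasDerivAt cubicPullbackDefect
      ((1 + 2 * x) * cubicPullbackDeriv2 x + 3 * cubicPullbackDeriv x) x := by
    refine ((((hasDerivAt_id' x).const_mul 2).const_add 1).fun_mul h2 |>.fun_add h1).congr_deriv ?_
    ring
  have hfactor := cubicMap_factor (x := x) (by linarith) (cubicPullback x) (cubicPullbackDeriv x)
    (cubicPullbackDeriv2 x)
  rw [hV.deriv, cubicPullbackDefect, ← hfactor]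
  simp only [cubicPullback, cubicPullbackDeriv, cubicPullbackDeriv2]
  linear_combination (1 + 2 * x) * cubicMapDeriv x ^ 3 * hode

lemma analyticAt_cubicPullbackDefect : AnalyticAt ℝ cubicPullbackDefect 0 := by
  have hF := analyticOnNhd_ordinaryHypergeometric _ eventually_cubicMap_mem.self_of_nhds.2
  have hφ : AnalyticAt ℝ cubicMap 0 := by unfold cubicMap; fun_prop (disch := norm_num)
  have hφ' : AnalyticAt ℝ cubicMapDeriv 0 := by unfold cubicMapDeriv; fun_prop (disch := norm_num)
  have := hF.comp hφ
  have := hF.deriv.comp hφ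
  unfold cubicPullbackDefect cubicPullbackDeriv cubicPullback
  fun_prop

lemma cubicPullbackDefect_eventually_eq_zero : ∀ᶠ x in 𝓝 0, cubicPullbackDefect x = 0 := by
  refine analyticAt_cubicPullbackDefect.eventually_eq_zero_of_regularSingular ?_ ?_ (fun n => ?_)
    eventually_cubicPullbackDefect_ode
  · unfold cubicMap cubicMapDeriv; fun_prop (disch := norm_num)
  · unfold cubicMapDeriv; fun_prop (disch := norm_num)
  · norm_num [cubicMap, cubicMapDeriv]
    positivity

theorem ordinaryHypergeometric_cubicMap_eventually_eq :
    ∀ᶠ x in 𝓝 0, ₂F₁ (1 / 2 : ℝ) (-1 / 6) (2 / 3) (cubicMap x) = (1 + 2 * x) ^ (-1 / 2 : ℝ) := by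
  have hW : ∀ᶠ x in 𝓝 0, HasDerivAt (fun x => cubicPullback x ^ 2 * (1 + 2 * x)) 0 x := by
    filter_upwards [eventually_hasDerivAt_cubicPullback, cubicPullbackDefect_eventually_eq_zero]
      with x hder hV
    refine ((hder.1.fun_pow 2).fun_mul
      (((hasDerivAt_id' x).const_mul 2).const_add 1)).congr_deriv ?_
    rw [cubicPullbackDefect] at hV
    linear_combination 2 * cubicPullback x * hV
  have hpos : ∀ᶠ x in 𝓝 0, 0 < cubicPullback x :=
    continuousAt_const.eventually_lt eventually_hasDerivAt_cubicPullback.self_of_nhds.1.continuousAt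
      (by simp [cubicPullback, cubicMap_zero])
  filter_upwards [eventually_eq_of_hasDerivAt_zero hW, hpos] with x hx hxpos
  refine eq_rpow_neg_half_of_sq_mul_eq_one hxpos.le ?_
  simpa [cubicPullback, cubicMap_zero] using hx

end CubicTransformation

theorem stmt4 : ∃ ε > 0, ∀ x : ℝ, |x| < ε →
    hypgeo (1/2) (-1/6) (2/3) (x * (x + 2)^3 / (2*x + 1)^3) =
      (1 + 2*x) ^ ((-1 : ℝ)/2) := by
  obtain ⟨ε, hε, h⟩ := Metric.eventually_nhds_iff.mp ordinaryHypergeometric_cubicMap_eventually_eq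
  refine ⟨ε, hε, fun x hx => ?_⟩
  rw [hypgeo_eq_ordinaryHypergeometric]
  exact h (by simpa using hx)
end

section
/- The real Gamma function satisfies Γ(2/3)·Γ(13/12) / (Γ(4/3)·Γ(5/12)) = (√3 + 1)/4 and Γ(2/3)·Γ(7/12) / (4·Γ(4/3)·Γ(11/12)) = 3(√3 - 1)/4. -/
/-!
Via `Γ(s + 1) = s Γ(s)` both identities are relations between `Γ` at `1/12, 5/12, 7/12, 11/12`
and `1/3, 2/3`. Two applications of Legendre's duplication formula express
`Γ(1/12) Γ(7/12) Γ(2/3)` through `Γ(1/3)` and `Γ(5/12) Γ(11/12) Γ(1/3)` through `Γ(2/3)`;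
Euler's reflection formula `Γ(5/12) Γ(7/12) = π / sin (5π/12)`, with
`sin (5π/12) = √2 (√3 + 1) / 4`, then removes `π` and leaves the factors `√3 ± 1`.
-/

open Real

namespace Real

theorem Gamma_mul_Gamma_add_half_mul_Gamma_two_mul_add_half (s : ℝ) :
    Gamma s * Gamma (s + 1 / 2) * Gamma (2 * s + 1 / 2) =
      Gamma (4 * s) * 2 ^ (2 - 6 * s) * π := by
  calc Gamma s * Gamma (s + 1 / 2) * Gamma (2 * s + 1 / 2)
      = Gamma (2 * s) * Gamma (2 * s + 1 / 2) * 2 ^ (1 - 2 * s) * √π := by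
        rw [Gamma_mul_Gamma_add_half]; ring
    _ = Gamma (4 * s) * (2 ^ (1 - 4 * s) * 2 ^ (1 - 2 * s)) * (√π * √π) := by
        rw [Gamma_mul_Gamma_add_half]; ring_nf
    _ = Gamma (4 * s) * 2 ^ (2 - 6 * s) * π := by
        rw [← rpow_add two_pos, mul_self_sqrt pi_pos.le]; ring_nf

theorem Gamma_mul_Gamma_add_half_mul_Gamma_two_mul_sub_half (s : ℝ) :
    Gamma s * Gamma (s + 1 / 2) * Gamma (2 * s - 1 / 2) =
      Gamma (4 * s - 1) * 2 ^ (3 - 6 * s) * π := by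
  calc Gamma s * Gamma (s + 1 / 2) * Gamma (2 * s - 1 / 2)
      = Gamma (2 * s - 1 / 2) * Gamma (2 * s - 1 / 2 + 1 / 2) * 2 ^ (1 - 2 * s) * √π := by
        rw [Gamma_mul_Gamma_add_half, sub_add_cancel]; ring
    _ = Gamma (4 * s - 1) * (2 ^ (2 - 4 * s) * 2 ^ (1 - 2 * s)) * (√π * √π) := by
        rw [Gamma_mul_Gamma_add_half]; ring_nf
    _ = Gamma (4 * s - 1) * 2 ^ (3 - 6 * s) * π := by
        rw [← rpow_add two_pos, mul_self_sqrt pi_pos.le]; ring_nf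

theorem sin_pi_mul_five_div_twelve : sin (π * (5 / 12)) = √2 * (√3 + 1) / 4 := by
  rw [show π * (5 / 12) = π / 4 + π / 6 by ring, sin_add, sin_pi_div_four, cos_pi_div_four,
    sin_pi_div_six, cos_pi_div_six]
  ring

theorem Gamma_five_div_twelve_mul_Gamma_seven_div_twelve :
    Gamma (5 / 12) * Gamma (7 / 12) * (√2 * (√3 + 1) / 4) = π := by
  have hrefl := Gamma_mul_Gamma_one_sub (5 / 12)
  rw [sin_pi_mul_five_div_twelve, eq_div_iff (by positivity)] at hrefl
  norm_num at hrefl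
  exact hrefl

theorem Gamma_two_div_three_mul_Gamma_one_div_twelve :
    Gamma (2 / 3) * Gamma (1 / 12) = (√3 + 1) * (Gamma (1 / 3) * Gamma (5 / 12)) := by
  have hchain := Gamma_mul_Gamma_add_half_mul_Gamma_two_mul_add_half (1 / 12)
  have hpow : (2 : ℝ) ^ (2 - 6 * (1 / 12) : ℝ) = 2 * √2 := by
    rw [sqrt_eq_rpow, ← rpow_one_add' zero_le_two (by norm_num)]; norm_num
  rw [hpow] at hchain
  norm_num at hchain
  have hs2 : √2 * √2 = 2 := mul_self_sqrt zero_le_two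
  refine mul_right_cancel₀ (Gamma_pos_of_pos (by norm_num : (0 : ℝ) < 7 / 12)).ne' ?_
  linear_combination hchain
    - 2 * √2 * Gamma (1 / 3) * Gamma_five_div_twelve_mul_Gamma_seven_div_twelve
    + Gamma (1 / 3) * Gamma (5 / 12) * Gamma (7 / 12) * (√3 + 1) / 2 * hs2

theorem Gamma_two_div_three_mul_Gamma_seven_div_twelve :
    Gamma (2 / 3) * Gamma (7 / 12) = (√3 - 1) * (Gamma (1 / 3) * Gamma (11 / 12)) := by
  have hchain := Gamma_mul_Gamma_add_half_mul_Gamma_two_mul_sub_half (5 / 12)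
  have hpow : (2 : ℝ) ^ (3 - 6 * (5 / 12) : ℝ) = √2 := by
    rw [sqrt_eq_rpow]; norm_num
  rw [hpow] at hchain
  norm_num at hchain
  have hs2 : √2 * √2 = 2 := mul_self_sqrt zero_le_two
  have hs3 : √3 * √3 = 3 := mul_self_sqrt zero_le_three
  refine mul_right_cancel₀ (Gamma_pos_of_pos (by norm_num : (0 : ℝ) < 5 / 12)).ne' ?_
  linear_combination -(√3 - 1) * hchain
    + (√3 - 1) * Gamma (2 / 3) * √2 * Gamma_five_div_twelve_mul_Gamma_seven_div_twelve
    - Gamma (2 / 3) * Gamma (5 / 12) * Gamma (7 / 12) * ((√3 * √3 - 1) / 4 * hs2 + hs3 / 2)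

end Real

theorem stmt19 :
    Real.Gamma (2/3) * Real.Gamma (13/12) / (Real.Gamma (4/3) * Real.Gamma (5/12)) =
      (Real.sqrt 3 + 1) / 4 ∧
    Real.Gamma (2/3) * Real.Gamma (7/12) / (4 * Real.Gamma (4/3) * Real.Gamma (11/12)) =
      3 * (Real.sqrt 3 - 1) / 4 := by
  have hΓ13 : Gamma (13 / 12) = Gamma (1 / 12) / 12 := by
    rw [show (13 : ℝ) / 12 = 1 / 12 + 1 by norm_num, Gamma_add_one (by norm_num)]; ring
  have hΓ43 : Gamma (4 / 3) = Gamma (1 / 3) / 3 := by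
    rw [show (4 : ℝ) / 3 = 1 / 3 + 1 by norm_num, Gamma_add_one (by norm_num)]; ring
  constructor
  · rw [hΓ13, hΓ43, div_eq_iff (by positivity)]
    linear_combination Gamma_two_div_three_mul_Gamma_one_div_twelve / 12
  · rw [hΓ43, div_eq_iff (by positivity)]
    linear_combination Gamma_two_div_three_mul_Gamma_seven_div_twelve
end
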